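/- Implementing delete as a move under a special trash node (a fixed child of the root that itself is never moved) preserves acyclicity and keeps every node reachable from the root: after any sequence of safe moves and deletes, the structure remains a tree rooted at r containing all nodes. -/
import Mathlib


/-- `y` is the parent of `x` under parent function `f` (the root has no parent). -/
def parentRel {V : Type*} (f : V → Option V) (x y : V) : Prop := f x = some y

/-- `a` is a proper ancestor of `b`. -/
def isAncestor {V : Type*} (f : V → Option V) (a b : V) : Prop :=
  Relation.TransGen (parentRel f) b a

/-- No node is its own proper ancestor. -/
def Acyclic {V : Type*} (f : V → Option V) : Prop := ∀ x, ¬ isAncestor f x x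

/-- The structure is a tree rooted at `r` containing all nodes, with a fixed trash node
`tr` that is a child of the root: the root has no parent, every non-root node has a
parent, there are no cycles, and every node is reachable from the root. -/
def TreeInv {V : Type*} (r tr : V) (f : V → Option V) : Prop :=
  f r = none ∧ f tr = some r ∧ (∀ v, v ≠ r → (f v).isSome) ∧ Acyclic f ∧
    ∀ v : V, Relation.ReflTransGen (parentRel f) v r

open scoped Classical in
/-- Apply a move (or delete, i.e. a move under `tr`) `o = (n, p)`: the move is performed
only when it is safe (`n` is not the root or the trash node, `n ≠ p`, and `n` is not an
ancestor of `p`); otherwise the state is unchanged. -/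
noncomputable def applySafeMove {V : Type*} [DecidableEq V] (r tr : V)
    (f : V → Option V) (o : V × V) : V → Option V :=
  if o.1 ≠ r ∧ o.1 ≠ tr ∧ o.1 ≠ o.2 ∧ ¬ isAncestor f o.1 o.2 then
    Function.update f o.1 (some o.2)
  else f

lemma acyclic_of_reach {V : Type*} {f : V → Option V} {r : V} (hr : f r = none)
    (hreach : ∀ v, Relation.ReflTransGen (parentRel f) v r) : Acyclic f := by
  intro x hx
  have h := hreach x
  unfold isAncestor at hx
  revert hx
  induction h using Relation.ReflTransGen.head_induction_on with
  | refl =>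
    intro hx
    obtain ⟨c, hc, -⟩ := (Relation.TransGen.head'_iff).1 hx
    simp [parentRel, hr] at hc
  | head hstep hrest ih =>
    rename_i a b
    intro hx
    obtain ⟨c, hc, hcx⟩ := (Relation.TransGen.head'_iff).1 hx
    have hcb : c = b := by
      have : some c = some b := by rw [← hc, ← hstep]
      exact Option.some.inj this
    subst hcb
    exact ih (Relation.TransGen.tail' hcx hstep)

lemma reach_update_of_not_anc {V : Type*} [DecidableEq V] {f : V → Option V} {r n : V}
    (p : V) {v : V} (h : Relation.ReflTransGen (parentRel f) v r) :
    n ≠ v → ¬ isAncestor f n v →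
    Relation.ReflTransGen (parentRel (Function.update f n (some p))) v r := by
  induction h using Relation.ReflTransGen.head_induction_on with
  | refl => intro _ _; exact Relation.ReflTransGen.refl
  | head hstep hrest ih =>
    rename_i a b
    intro hna hanc
    have hstep' : parentRel (Function.update f n (some p)) a b := by
      unfold parentRel
      rw [Function.update_of_ne (Ne.symm hna)]
      exact hstep
    have hnb : n ≠ b := by
      rintro rfl
      exact hanc (Relation.TransGen.single hstep)
    have hancb : ¬ isAncestor f n b := fun hb =>
      hanc (Relation.TransGen.head hstep hb)
    exact Relation.ReflTransGen.head hstep' (ih hnb hancb)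

lemma reach_update_all {V : Type*} [DecidableEq V] {f : V → Option V} {r n : V} (p : V)
    (hn : Relation.ReflTransGen (parentRel (Function.update f n (some p))) n r)
    {v : V} (h : Relation.ReflTransGen (parentRel f) v r) :
    Relation.ReflTransGen (parentRel (Function.update f n (some p))) v r := by
  induction h using Relation.ReflTransGen.head_induction_on with
  | refl => exact Relation.ReflTransGen.refl
  | head hstep hrest ih =>
    rename_i a b
    by_cases ha : a = n
    · subst ha; exact hn
    · have hstep' : parentRel (Function.update f n (some p)) a b := by
        unfold parentRel
        rw [Function.update_of_ne ha]
        exact hstep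
      exact Relation.ReflTransGen.head hstep' ih

lemma applySafeMove_preserves {V : Type*} [DecidableEq V] (r tr : V)
    (f : V → Option V) (hinv : TreeInv r tr f) (o : V × V) :
    TreeInv r tr (applySafeMove r tr f o) := by
  obtain ⟨hr, htr, hsome, hacy, hreach⟩ := hinv
  unfold applySafeMove
  split_ifs with h
  · obtain ⟨hnr, hntr, hnp, hanc⟩ := h
    set f' := Function.update f o.1 (some o.2) with hf'
    have hfr : f' r = none := by
      rw [hf', Function.update_of_ne (Ne.symm hnr)]; exact hr
    have hftr : f' tr = some r := by
      rw [hf', Function.update_of_ne (Ne.symm hntr)]; exact htr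
    have hreach' : ∀ v, Relation.ReflTransGen (parentRel f') v r := by
      have hstepn : parentRel f' o.1 o.2 := by
        unfold parentRel; rw [hf', Function.update_self]
      have hp : Relation.ReflTransGen (parentRel f') o.2 r :=
        reach_update_of_not_anc o.2 (hreach o.2) hnp hanc
      have hn : Relation.ReflTransGen (parentRel f') o.1 r :=
        Relation.ReflTransGen.head hstepn hp
      intro v
      exact reach_update_all o.2 hn (hreach v)
    refine ⟨hfr, hftr, ?_, acyclic_of_reach hfr hreach', hreach'⟩
    intro v hv
    by_cases hvn : v = o.1
    · subst hvn; rw [hf', Function.update_self]; rfl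
    · rw [hf', Function.update_of_ne hvn]; exact hsome v hv
  · exact ⟨hr, htr, hsome, hacy, hreach⟩

/-- implementing delete as a move under a special trash node (a fixed child
of the root that is never itself moved) preserves acyclicity and keeps every node
reachable from the root: after any sequence of safe moves and deletes, the structure
remains a tree rooted at `r` containing all nodes. -/
theorem safe_moves_preserve_tree {V : Type*} [Fintype V] [DecidableEq V]
    (r tr : V) (f₀ : V → Option V) (hinv : TreeInv r tr f₀)
    (ops : List (V × V)) :
    TreeInv r tr (ops.foldl (applySafeMove r tr) f₀) := by
  induction ops generalizing f₀ with
  | nil => exact hinv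
  | cons o rest ih => exact ih _ (applySafeMove_preserves r tr f₀ hinv o)
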